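/- The group R3 = (C3 ≀ S8)^° ×_sign (C2 ≀ S12)^° has order 43252003274489856000 = 2^27 · 3^14 · 5^3 · 7^2 · 11. -/

import Mathlib

open Equiv

/-- The automorphism of `(Z/n)^m` (written multiplicatively) permuting coordinates by `σ`. -/
def permAut (n m : ℕ) (σ : Equiv.Perm (Fin m)) :
    MulAut (Fin m → Multiplicative (ZMod n)) :=
  { Equiv.piCongrLeft' (fun _ => Multiplicative (ZMod n)) σ with
    map_mul' := fun _ _ => rfl }

/-- The action of `S_m` on `(Z/n)^m` permuting coordinates. -/
def permHom (n m : ℕ) : Equiv.Perm (Fin m) →* MulAut (Fin m → Multiplicative (ZMod n)) where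
  toFun := permAut n m
  map_one' := by ext x i; rfl
  map_mul' := fun σ τ => by ext x i; rfl

/-- The wreath product `C_n ≀ S_m = (Z/n)^m ⋊ S_m`, where `S_m` permutes coordinates. -/
abbrev Wr (n m : ℕ) :=
  SemidirectProduct (Fin m → Multiplicative (ZMod n)) (Equiv.Perm (Fin m)) (permHom n m)

/-- The homomorphism `C_n ≀ S_m → Z/n`, `(x, σ) ↦ ∑ i, x i`. -/
def sumHom (n m : ℕ) : Wr n m →* Multiplicative (ZMod n) :=
  SemidirectProduct.lift
    (MonoidHom.mk' (fun x => ∏ i, x i) (by intro a b; simp [Finset.prod_mul_distrib]))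
    1
    (by
      intro σ
      refine MonoidHom.ext fun x => ?_
      simp
      exact Equiv.prod_comp σ.symm x)

/-- `(C_n ≀ S_m)^°`, the kernel of `(x, σ) ↦ ∑ i, x i`. -/
abbrev WrO (n m : ℕ) : Subgroup (Wr n m) := (sumHom n m).ker

/-- The sign homomorphism `(C_n ≀ S_m)^° → {±1}`, `(x, σ) ↦ sign σ`. -/
def signW (n m : ℕ) : ↥(WrO n m) →* ℤˣ :=
  (Equiv.Perm.sign.comp SemidirectProduct.rightHom).comp (WrO n m).subtype

/-- The fiber product `G ×_{φ,ψ} H = {(a, b) : φ a = ψ b}` of two group homomorphisms,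
as a subgroup of the direct product `G × H`. -/
def fiberProduct {G H K : Type*} [Group G] [Group H] [Group K]
    (φ : G →* K) (ψ : H →* K) : Subgroup (G × H) where
  carrier := {p | φ p.1 = ψ p.2}
  one_mem' := by simp
  mul_mem' := by
    intro a b ha hb
    simp only [Set.mem_setOf_eq, Prod.fst_mul, Prod.snd_mul, map_mul] at *
    rw [ha, hb]
  inv_mem' := by
    intro a ha
    simp only [Set.mem_setOf_eq, Prod.fst_inv, Prod.snd_inv, map_inv] at *
    rw [ha]

/-- The Rubik's Cube group `R3 = (C3 ≀ S8)^° ×_sign (C2 ≀ S12)^°`. -/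
abbrev RubikR3 : Subgroup (↥(WrO 3 8) × ↥(WrO 2 12)) :=
  fiberProduct (signW 3 8) (signW 2 12)

/-!
Both `(x, σ) ↦ ∑ xᵢ` on `C_n ≀ S_m` and the sign on `(C_3 ≀ S_8)^°` are surjective. A fiber
product over a surjection `φ : G → K` has order `|G| |H| / |K|`, because its projection to `H` is
onto with kernel `ker φ`. Hence `|R3| = (3^8 · 8! / 3) (2^12 · 12! / 2) / 2`.
-/

open Function

theorem MonoidHom.card_ker_mul_card_of_surjective {G K : Type*} [Group G] [Group K] {f : G →* K}
    (hf : Surjective f) : Nat.card f.ker * Nat.card K = Nat.card G := by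
  rw [← f.ker.card_mul_index, Subgroup.index_ker, f.range_eq_top_of_surjective hf,
    Subgroup.card_top]

section FiberProduct

variable {G H K : Type*} [Group G] [Group H] [Group K] {φ : G →* K} {ψ : H →* K}

@[simp]
theorem mem_fiberProduct {p : G × H} : p ∈ fiberProduct φ ψ ↔ φ p.1 = ψ p.2 := Iff.rfl

theorem card_fiberProduct_mul (hφ : Surjective φ) :
    Nat.card (fiberProduct φ ψ) * Nat.card K = Nat.card G * Nat.card H := by
  let snd : fiberProduct φ ψ →* H := (MonoidHom.snd G H).comp (fiberProduct φ ψ).subtype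
  have hsnd : Surjective snd := fun b =>
    let ⟨a, ha⟩ := hφ (ψ b)
    ⟨⟨(a, b), ha⟩, rfl⟩
  have hker : Nat.card snd.ker = Nat.card φ.ker := Nat.card_congr
    { toFun := fun ⟨⟨(a, b), (hab : φ a = ψ b)⟩, (hb : b = 1)⟩ =>
        ⟨a, by rw [MonoidHom.mem_ker, hab, hb, map_one]⟩
      invFun := fun ⟨a, (ha : φ a = 1)⟩ => ⟨⟨(a, 1), by rw [mem_fiberProduct, ha, map_one]⟩, rfl⟩
      left_inv := fun ⟨⟨(a, b), _⟩, (hb : b = 1)⟩ => by subst hb; rfl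
      right_inv := fun _ => rfl }
  rw [← snd.card_ker_mul_card_of_surjective hsnd, hker, mul_right_comm,
    φ.card_ker_mul_card_of_surjective hφ]

end FiberProduct

theorem sumHom_surjective (n : ℕ) {m : ℕ} (hm : 0 < m) : Surjective (sumHom n m) := fun z =>
  ⟨⟨Pi.mulSingle ⟨0, hm⟩ z, 1⟩, by simp [sumHom]⟩

theorem card_WrO_mul (n : ℕ) {m : ℕ} (hm : 0 < m) :
    Nat.card (WrO n m) * n = n ^ m * m.factorial := by
  have hC : Nat.card (Multiplicative (ZMod n)) = n :=
    (Nat.card_congr Multiplicative.toAdd).trans (Nat.card_zmod n)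
  simpa [Nat.card_fun, hC, Fintype.card_perm] using
    (sumHom n m).card_ker_mul_card_of_surjective (sumHom_surjective n hm)

theorem signW_surjective (n : ℕ) {m : ℕ} (hm : 2 ≤ m) : Surjective (signW n m) := by
  have : Nontrivial (Fin m) := Fin.nontrivial_iff_two_le.mpr hm
  intro s
  obtain ⟨σ, rfl⟩ := Perm.sign_surjective (Fin m) s
  exact ⟨⟨⟨1, σ⟩, by simp [sumHom]⟩, rfl⟩

/-- The Rubik's Cube group `R3 = (C3 ≀ S8)^° ×_sign (C2 ≀ S12)^°` has order
`43252003274489856000 = 2^27 · 3^14 · 5^3 · 7^2 · 11`. -/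
theorem rubik_R3_card :
    Nat.card ↥RubikR3 = 43252003274489856000 ∧
    (43252003274489856000 : ℕ) = 2 ^ 27 * 3 ^ 14 * 5 ^ 3 * 7 ^ 2 * 11 := by
  refine ⟨?_, by norm_num⟩
  have hcorners : Nat.card (WrO 3 8) = 88179840 :=
    Nat.eq_of_mul_eq_mul_right three_pos ((card_WrO_mul 3 (by norm_num)).trans rfl)
  have hedges : Nat.card (WrO 2 12) = 980995276800 :=
    Nat.eq_of_mul_eq_mul_right two_pos ((card_WrO_mul 2 (by norm_num)).trans rfl)
  have hR := card_fiberProduct_mul (ψ := signW 2 12) (signW_surjective 3 (m := 8) (by norm_num))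
  rw [hcorners, hedges, Nat.card_eq_fintype_card (α := ℤˣ), Fintype.card_units_int] at hR
  exact Nat.eq_of_mul_eq_mul_right two_pos (hR.trans rfl)
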